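/- Let (Λ, L) satisfy the spinor consistency relations. Define γ̄^B = Σ_C Λ_C{}^B γ^C for B = 0,1,2,3, γ̄⁵ = L γ⁵ L⁻¹, and Σ̄^A = γ̄⁵ γ̄⁰ γ̄^A for A = 1,2,3. Then Σ̄^A = L Σ^A L⁻¹ for each A ∈ {1,2,3}. -/

import Mathlib

/-!
The Lorentz condition `Λᵀ η Λ = η` says that the matrix `Λ_C{}^B = (η Λ η)_{CB}` is, transposed,
the inverse of `Λ`. Hence the consistency relation `L⁻¹ γ^A L = Σ_B Λ^A{}_B γ^B` can be inverted to
`γ̄^B = L γ^B L⁻¹`, and since conjugation by `L` is multiplicative,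
`Σ̄^A = (L γ⁵ L⁻¹)(L γ⁰ L⁻¹)(L γ^A L⁻¹) = L Σ^A L⁻¹`.
-/

open Matrix Complex

noncomputable section

/-- The chiral-representation gamma matrices. -/
def γ : Fin 4 → Matrix (Fin 4) (Fin 4) ℂ
  | 0 => !![0, 0, -1, 0; 0, 0, 0, -1; -1, 0, 0, 0; 0, -1, 0, 0]
  | 1 => !![0, 0, 0, 1; 0, 0, 1, 0; 0, -1, 0, 0; -1, 0, 0, 0]
  | 2 => !![0, 0, 0, -I; 0, 0, I, 0; 0, I, 0, 0; -I, 0, 0, 0]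
  | 3 => !![0, 0, 1, 0; 0, 0, 0, -1; -1, 0, 0, 0; 0, 1, 0, 0]

/-- γ⁵ = i γ⁰γ¹γ²γ³. -/
def γ5 : Matrix (Fin 4) (Fin 4) ℂ := I • (γ 0 * γ 1 * γ 2 * γ 3)

/-- The spin operators Σ^A = γ⁵γ⁰γ^A. -/
def SpinOp (A : Fin 4) : Matrix (Fin 4) (Fin 4) ℂ := γ5 * γ 0 * γ A

/-- The Minkowski metric matrix η = diag(1,-1,-1,-1). -/
def η : Matrix (Fin 4) (Fin 4) ℝ := !![1,0,0,0; 0,-1,0,0; 0,0,-1,0; 0,0,0,-1]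

/-- A pair (Λ, L) satisfies the spinor consistency relations:
Λ is a Lorentz transformation, L is invertible,
L⁻¹ γ^A L = Σ_B Λ^A_B γ^B for each A, and γ⁰ L† γ⁰ = L⁻¹. -/
def SpinorConsistent (Λ : Matrix (Fin 4) (Fin 4) ℝ) (L : Matrix (Fin 4) (Fin 4) ℂ) : Prop :=
  Λᵀ * η * Λ = η ∧ IsUnit L.det ∧
  (∀ A : Fin 4, L⁻¹ * γ A * L = ∑ B : Fin 4, (Λ A B : ℂ) • γ B) ∧
  γ 0 * Lᴴ * γ 0 = L⁻¹

/-- Λ_B{}^C = Σ_{D,E} η_{BD} Λ^D{}_E η^{EC}, lowering the first and raising the second index. -/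
def lowerRaise (Λ : Matrix (Fin 4) (Fin 4) ℝ) (B C : Fin 4) : ℝ :=
  ∑ D, ∑ E, η B D * Λ D E * η E C

lemma η_mul_η : η * η = 1 := by
  ext i j
  fin_cases i <;> fin_cases j <;> simp [η, mul_apply, Fin.sum_univ_four, one_apply]

lemma η_transpose : ηᵀ = η := by
  ext i j
  fin_cases i <;> fin_cases j <;> simp [η]

lemma lowerRaise_eq_mul (Λ : Matrix (Fin 4) (Fin 4) ℝ) : lowerRaise Λ = η * Λ * η := by
  ext B C
  simp only [lowerRaise, mul_apply, Finset.sum_mul]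
  exact Finset.sum_comm

lemma transpose_η_mul_mul_η_mul_eq_one {Λ : Matrix (Fin 4) (Fin 4) ℝ} (hΛ : Λᵀ * η * Λ = η) :
    (η * Λ * η)ᵀ * Λ = 1 := by
  rw [transpose_mul, transpose_mul, η_transpose, Matrix.mul_assoc η, hΛ, η_mul_η]

lemma sum_smul_eq_conj_of_transpose_mul_eq_one {n ι : Type*} [Fintype n] [DecidableEq n]
    [Fintype ι] [DecidableEq ι] (g : ι → Matrix n n ℂ) {L : Matrix n n ℂ} (hL : IsUnit L.det)
    {Λ M : Matrix ι ι ℝ} (hM : Mᵀ * Λ = 1) (hg : ∀ A, L⁻¹ * g A * L = ∑ B, (Λ A B : ℂ) • g B)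
    (B : ι) : ∑ C, (M C B : ℂ) • g C = L * g B * L⁻¹ := by
  have hconj : L⁻¹ * (∑ C, (M C B : ℂ) • g C) * L = g B :=
    calc L⁻¹ * (∑ C, (M C B : ℂ) • g C) * L = ∑ C, (M C B : ℂ) • (L⁻¹ * g C * L) := by
          simp only [Finset.mul_sum, Finset.sum_mul, Matrix.mul_smul, Matrix.smul_mul]
      _ = ∑ D, (((Mᵀ * Λ) B D : ℝ) : ℂ) • g D := by
          simp only [hg, Finset.smul_sum, smul_smul, mul_apply, transpose_apply, Complex.ofReal_sum,
            Complex.ofReal_mul, Finset.sum_smul]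
          exact Finset.sum_comm
      _ = g B := by simp [hM, one_apply]
  calc ∑ C, (M C B : ℂ) • g C = L * (L⁻¹ * (∑ C, (M C B : ℂ) • g C) * L) * L⁻¹ := by
        simp only [Matrix.mul_assoc, mul_nonsing_inv _ hL, mul_one, mul_nonsing_inv_cancel_left _ _ hL]
    _ = L * g B * L⁻¹ := by rw [hconj]

lemma sum_lowerRaise_smul_γ {Λ : Matrix (Fin 4) (Fin 4) ℝ} {L : Matrix (Fin 4) (Fin 4) ℂ}
    (h : SpinorConsistent Λ L) (B : Fin 4) :
    ∑ C, (lowerRaise Λ C B : ℂ) • γ C = L * γ B * L⁻¹ := by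
  obtain ⟨hΛ, hL, hγ, -⟩ := h
  rw [lowerRaise_eq_mul]
  exact sum_smul_eq_conj_of_transpose_mul_eq_one γ hL (transpose_η_mul_mul_η_mul_eq_one hΛ) hγ B

theorem transformed_spin_operator_general (Λ : Matrix (Fin 4) (Fin 4) ℝ) (L : Matrix (Fin 4) (Fin 4) ℂ)
    (h : SpinorConsistent Λ L) (A : Fin 4) :
    (let γbar : Fin 4 → Matrix (Fin 4) (Fin 4) ℂ :=
      fun B => ∑ C : Fin 4, (lowerRaise Λ C B : ℂ) • γ C
    let γ5bar : Matrix (Fin 4) (Fin 4) ℂ := L * γ5 * L⁻¹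
    let Sbar : Fin 4 → Matrix (Fin 4) (Fin 4) ℂ := fun A => γ5bar * γbar 0 * γbar A
    Sbar A = L * SpinOp A * L⁻¹) := by
  simp only [sum_lowerRaise_smul_γ h, SpinOp, Matrix.mul_assoc,
    nonsing_inv_mul_cancel_left _ _ h.2.1]

/-- With γ̄^B = Σ_C Λ_C{}^B γ^C, γ̄⁵ = L γ⁵ L⁻¹, Σ̄^A = γ̄⁵ γ̄⁰ γ̄^A:
Σ̄^A = L Σ^A L⁻¹ for each A ∈ {1,2,3}. -/
theorem transformed_spin_operator (Λ : Matrix (Fin 4) (Fin 4) ℝ) (L : Matrix (Fin 4) (Fin 4) ℂ)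
    (h : SpinorConsistent Λ L) (A : Fin 4) (hA : A ∈ ({1, 2, 3} : Set (Fin 4))) :
    (let γbar : Fin 4 → Matrix (Fin 4) (Fin 4) ℂ :=
      fun B => ∑ C : Fin 4, (lowerRaise Λ C B : ℂ) • γ C
    let γ5bar : Matrix (Fin 4) (Fin 4) ℂ := L * γ5 * L⁻¹
    let Sbar : Fin 4 → Matrix (Fin 4) (Fin 4) ℂ := fun A => γ5bar * γbar 0 * γbar A
    Sbar A = L * SpinOp A * L⁻¹) :=
  transformed_spin_operator_general Λ L h A
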